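/- arXiv:1302.3268 — 4 statements merged into one kernel-verified Lean document; each statement's English description precedes it below -/
import Mathlib

section
/- Let Ω be a finite set with n ≥ 2 elements, let x* ∈ Ω, and let D_1, …, D_k be probability distributions on Ω such that D_i(x*) > D_i(x) for every crowd i and every option x ≠ x*. Then the induced gap f(μ) = ε(D_μ) is Lipschitz-continuous on the simplex with respect to the ℓ1 norm: for any two probability vectors μ, μ' ∈ ℝ^k, |f(μ) − f(μ')| ≤ n·‖μ − μ'‖_1, where ‖v‖_1 = ∑_i |v_i|. -/
/-- The *gap* of a distribution `D` on a finite set: the difference between the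
largest and the second-largest probability values, i.e.
`max_x (D x − max_{y ≠ x} D y)`. -/
noncomputable def gap {Ω : Type*} (D : Ω → ℝ) : ℝ :=
  ⨆ x, (D x - ⨆ y : {y : Ω // y ≠ x}, D (y : Ω))

lemma ciSup_le_ciSup_add {ι : Type*} [Finite ι] [Nonempty ι] {f g : ι → ℝ} {c : ℝ}
    (h : ∀ i, f i ≤ g i + c) : ⨆ i, f i ≤ (⨆ i, g i) + c :=
  ciSup_le fun i => (h i).trans <| add_le_add_left (le_ciSup (Set.finite_range g).bddAbove i) c

/-- The largest value moves by at most `c` and so does the second largest. -/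
lemma gap_le_gap_add {Ω : Type*} [Finite Ω] [Nontrivial Ω] {E F : Ω → ℝ} {c : ℝ}
    (h : ∀ x, |E x - F x| ≤ c) : gap E ≤ gap F + 2 * c := by
  have hEF : ∀ x, E x ≤ F x + c := fun x => by linarith [(abs_le.mp (h x)).2]
  have hFE : ∀ x, F x ≤ E x + c := fun x => by linarith [(abs_le.mp (h x)).1]
  refine ciSup_le_ciSup_add fun x => ?_
  have : Nonempty {y : Ω // y ≠ x} := nonempty_subtype.mpr (exists_ne x)
  have hsecond := ciSup_le_ciSup_add (ι := {y : Ω // y ≠ x}) fun y => hFE y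
  linarith [hEF x]

lemma abs_gap_sub_gap_le {Ω : Type*} [Finite Ω] [Nontrivial Ω] {E F : Ω → ℝ} {c : ℝ}
    (h : ∀ x, |E x - F x| ≤ c) : |gap E - gap F| ≤ 2 * c := by
  have h' : ∀ x, |F x - E x| ≤ c := fun x => abs_sub_comm (F x) (E x) ▸ h x
  rw [abs_sub_le_iff]
  constructor <;> linarith [gap_le_gap_add h, gap_le_gap_add h']

lemma abs_sum_mul_sub_sum_mul_le {ι : Type*} [Fintype ι] {a b d : ι → ℝ}
    (hd0 : ∀ i, 0 ≤ d i) (hd1 : ∀ i, d i ≤ 1) :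
    |∑ i, a i * d i - ∑ i, b i * d i| ≤ ∑ i, |a i - b i| := by
  rw [← Finset.sum_sub_distrib]
  refine (Finset.abs_sum_le_sum_abs _ _).trans (Finset.sum_le_sum fun i _ => ?_)
  rw [← sub_mul, abs_mul, abs_of_nonneg (hd0 i)]
  exact mul_le_of_le_one_right (abs_nonneg _) (hd1 i)

theorem stmt4_general {Ω : Type*} [Fintype Ω] (hn : 2 ≤ Fintype.card Ω)
    (k : ℕ) (D : Fin k → Ω → ℝ)
    (hD0 : ∀ i x, 0 ≤ D i x) (hD1 : ∀ i, ∑ x, D i x = 1)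
    (μ μ' : Fin k → ℝ) :
    |gap (fun x => ∑ i, μ i * D i x) - gap (fun x => ∑ i, μ' i * D i x)|
      ≤ (Fintype.card Ω : ℝ) * ∑ i, |μ i - μ' i| := by
  have : Nontrivial Ω := Fintype.one_lt_card_iff_nontrivial.mp hn
  have hD_le_one : ∀ i x, D i x ≤ 1 := fun i x =>
    hD1 i ▸ Finset.single_le_sum (fun y _ => hD0 i y) (Finset.mem_univ x)
  have hpointwise := fun x =>
    abs_sum_mul_sub_sum_mul_le (a := μ) (b := μ') (fun i => hD0 i x) (fun i => hD_le_one i x)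
  calc _ ≤ 2 * ∑ i, |μ i - μ' i| := abs_gap_sub_gap_le hpointwise
    _ ≤ _ := by
      gcongr
      exact_mod_cast hn

/-- **Claim 6.2(b).** The induced gap `f(μ) = ε(D_μ)` is Lipschitz-continuous
with respect to the `ℓ1` norm: `|f(μ) − f(μ')| ≤ n ‖μ − μ'‖₁`, where `n` is
the number of options. -/
theorem stmt4 {Ω : Type*} [Fintype Ω] (hn : 2 ≤ Fintype.card Ω)
    (xstar : Ω) (k : ℕ) (D : Fin k → Ω → ℝ)
    (hD0 : ∀ i x, 0 ≤ D i x) (hD1 : ∀ i, ∑ x, D i x = 1)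
    (hstar : ∀ i x, x ≠ xstar → D i xstar > D i x)
    (μ μ' : Fin k → ℝ) (hμ0 : ∀ i, 0 ≤ μ i) (hμ1 : ∑ i, μ i = 1)
    (hμ'0 : ∀ i, 0 ≤ μ' i) (hμ'1 : ∑ i, μ' i = 1) :
    |gap (fun x => ∑ i, μ i * D i x) - gap (fun x => ∑ i, μ' i * D i x)|
      ≤ (Fintype.card Ω : ℝ) * ∑ i, |μ i - μ' i| :=
  stmt4_general hn k D hD0 hD1 μ μ'
end

section
/- For every ε with 0 < ε ≤ 1/5 there exist two probability distributions D_1, D_2 on a three-element option set {x, y, z} such that the gap of each D_i equals ε, both D_1 and D_2 have x as their unique most probable option, and the uniform mixture D = (1/2)D_1 + (1/2)D_2 has gap at least 1/10. Concretely, one may take D_1 = (2/5+ε, 2/5, 1/5−ε) and D_2 = (2/5+ε, 1/5−ε, 2/5) (probabilities of x, y, z respectively), for which the mixture is (2/5+ε, 3/10−ε/2, 3/10−ε/2) and has gap 1/10 + 3ε/2 ≥ 1/10. -/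
theorem gap_eq_sub {Ω : Type*} [Finite Ω] {D : Ω → ℝ} {x₀ x₁ : Ω} (hx : x₁ ≠ x₀)
    (h₁₀ : D x₁ ≤ D x₀) (h₁ : ∀ y, y ≠ x₀ → D y ≤ D x₁) : gap D = D x₀ - D x₁ := by
  have : Nonempty Ω := ⟨x₀⟩
  have : Nonempty {y : Ω // y ≠ x₀} := ⟨⟨x₁, hx⟩⟩
  have hsup : ⨆ y : {y : Ω // y ≠ x₀}, D y = D x₁ :=
    le_antisymm (ciSup_le fun y => h₁ y y.2)
      (le_ciSup (f := fun y : {y : Ω // y ≠ x₀} => D y) (Set.finite_range _).bddAbove ⟨x₁, hx⟩)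
  apply le_antisymm
  · refine ciSup_le fun x => ?_
    rcases eq_or_ne x x₀ with rfl | hx₀
    · rw [hsup]
    · have : D x₀ ≤ ⨆ y : {y : Ω // y ≠ x}, D y :=
        le_ciSup (f := fun y : {y : Ω // y ≠ x} => D y) (Set.finite_range _).bddAbove
          ⟨x₀, hx₀.symm⟩
      linarith [h₁ x hx₀]
  · rw [← hsup]
    exact le_ciSup (f := fun x => D x - ⨆ y : {y : Ω // y ≠ x}, D y)
      (Set.finite_range _).bddAbove x₀

/-- **Lemma 5.1.** For every `0 < ε ≤ 1/5` there are two distributions on a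
three-element option set (taken to be `Fin 3`, with `x = 0`), each with gap `ε`
and unique most probable option `0`, whose uniform mixture has gap at least
`1/10`. -/
theorem stmt5 (ε : ℝ) (hε0 : 0 < ε) (hε1 : ε ≤ 1/5) :
    ∃ D₁ D₂ : Fin 3 → ℝ,
      (∀ x, 0 ≤ D₁ x) ∧ (∑ x, D₁ x = 1) ∧
      (∀ x, 0 ≤ D₂ x) ∧ (∑ x, D₂ x = 1) ∧
      gap D₁ = ε ∧ gap D₂ = ε ∧
      (∀ x, x ≠ 0 → D₁ 0 > D₁ x) ∧ (∀ x, x ≠ 0 → D₂ 0 > D₂ x) ∧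
      gap (fun x => (D₁ x + D₂ x) / 2) ≥ 1/10 := by
  refine ⟨![2/5 + ε, 2/5, 1/5 - ε], ![2/5 + ε, 1/5 - ε, 2/5],
    ?_, ?_, ?_, ?_, ?_, ?_, ?_, ?_, ?_⟩
  · intro x; fin_cases x <;> simp <;> linarith
  · simp [Fin.sum_univ_three]; ring
  · intro x; fin_cases x <;> simp <;> linarith
  · simp [Fin.sum_univ_three]; ring
  · rw [gap_eq_sub (x₀ := 0) (x₁ := 1) (by decide) (by simp; linarith)
      (by intro y hy; fin_cases y <;> simp at hy ⊢; linarith)]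
    simp
  · rw [gap_eq_sub (x₀ := 0) (x₁ := 2) (by decide) (by simp; linarith)
      (by intro y hy; fin_cases y <;> simp at hy ⊢; linarith)]
    simp
  · intro x hx; fin_cases x <;> simp at hx ⊢ <;> linarith
  · intro x hx; fin_cases x <;> simp at hx ⊢ <;> linarith
  · rw [gap_eq_sub (x₀ := 0) (x₁ := 1) (by decide) (by simp; linarith)
      (by intro y hy; fin_cases y <;> simp at hy ⊢; linarith)]
    simp only [Matrix.cons_val_zero, Matrix.cons_val_one]
    linarith
end

section
/- Let k ≥ 1, let τ : [0,1] → ℝ be a nonnegative concave function, let c_1, …, c_k > 0, let ε_1, …, ε_k ∈ [0,1], and let μ = (μ_1, …, μ_k) be a probability vector. Then (∑_i μ_i c_i) · τ(∑_i μ_i ε_i) ≥ min_i c_i τ(ε_i). -/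
/-!
By concave Jensen, `∑ i, μ i * τ (ε i) ≤ τ (∑ i, μ i * ε i)`, so it suffices to bound the minimum
of the products `c i * τ (ε i)` by the product of the averages `(∑ i, μ i * c i) * (∑ i, μ i * τ (ε i))`.
That follows from Cauchy–Schwarz applied to the vectors `√(μ i * c i)` and `√(μ i * τ (ε i))`.
-/

open Finset Real

theorem le_sum_mul_mul_sum_mul_of_le_mul {ι : Type*} [Fintype ι] {w a b : ι → ℝ} {m : ℝ}
    (hw : ∀ i, 0 ≤ w i) (hw1 : ∑ i, w i = 1) (ha : ∀ i, 0 ≤ a i) (hb : ∀ i, 0 ≤ b i)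
    (hm : ∀ i, m ≤ a i * b i) :
    m ≤ (∑ i, w i * a i) * (∑ i, w i * b i) := by
  have hwa : ∀ i, 0 ≤ w i * a i := fun i => mul_nonneg (hw i) (ha i)
  have hwb : ∀ i, 0 ≤ w i * b i := fun i => mul_nonneg (hw i) (hb i)
  rw [← sqrt_le_sqrt_iff (mul_nonneg (sum_nonneg fun i _ => hwa i) (sum_nonneg fun i _ => hwb i))]
  calc √m = ∑ i, w i * √m := by rw [← sum_mul, hw1, one_mul]
    _ ≤ ∑ i, w i * √(a i * b i) :=
        sum_le_sum fun i _ => mul_le_mul_of_nonneg_left (sqrt_le_sqrt (hm i)) (hw i)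
    _ = ∑ i, √(w i * a i) * √(w i * b i) := sum_congr rfl fun i _ => by
        rw [← sqrt_mul (hwa i), show w i * a i * (w i * b i) = w i ^ 2 * (a i * b i) by ring,
          sqrt_mul (sq_nonneg _), sqrt_sq (hw i)]
    _ ≤ √(∑ i, w i * a i) * √(∑ i, w i * b i) := sum_sqrt_mul_sqrt_le _ hwa hwb
    _ = √((∑ i, w i * a i) * (∑ i, w i * b i)) := (sqrt_mul (sum_nonneg fun i _ => hwa i) _).symm

/-- The core inequality in the proof of Lemma 5.2: for a nonnegative concave
function `τ` on `[0,1]`, positive costs `c i`, gaps `ε i ∈ [0,1]`, and a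
probability vector `μ`, `(∑ i, μ i * c i) * τ(∑ i, μ i * ε i) ≥ min_i c i * τ(ε i)`. -/
theorem stmt7 (k : ℕ) (hk : 1 ≤ k) (τ : ℝ → ℝ)
    (hτ0 : ∀ x ∈ Set.Icc (0 : ℝ) 1, 0 ≤ τ x)
    (hτconc : ConcaveOn ℝ (Set.Icc (0 : ℝ) 1) τ)
    (c ε μ : Fin k → ℝ)
    (hc : ∀ i, 0 < c i) (hε : ∀ i, ε i ∈ Set.Icc (0 : ℝ) 1)
    (hμ0 : ∀ i, 0 ≤ μ i) (hμ1 : ∑ i, μ i = 1) :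
    Finset.univ.inf' (Finset.univ_nonempty_iff.mpr (Fin.pos_iff_nonempty.mp hk))
        (fun i => c i * τ (ε i))
      ≤ (∑ i, μ i * c i) * τ (∑ i, μ i * ε i) := by
  have jensen : ∑ i, μ i * τ (ε i) ≤ τ (∑ i, μ i * ε i) := by
    simpa only [smul_eq_mul] using hτconc.le_map_sum (fun i _ => hμ0 i) hμ1 (fun i _ => hε i)
  calc _ ≤ (∑ i, μ i * c i) * ∑ i, μ i * τ (ε i) :=
        le_sum_mul_mul_sum_mul_of_le_mul hμ0 hμ1 (fun i => (hc i).le) (fun i => hτ0 _ (hε i))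
          fun i => inf'_le _ (mem_univ i)
    _ ≤ (∑ i, μ i * c i) * τ (∑ i, μ i * ε i) :=
        mul_le_mul_of_nonneg_left jensen (sum_nonneg fun i _ => mul_nonneg (hμ0 i) (hc i).le)
end

section
/- Let τ be a stopping time with respect to the natural filtration on the space {0,1}^ℕ of infinite bit sequences (so for each t, the event {τ = t} is determined by the first t coordinates), and suppose τ is symmetric: for each t, a sequence s belongs to the event {τ = t} if and only if the coordinatewise-flipped sequence s̄ (with every bit negated) belongs to {τ = t}. For p ∈ (1/2, 1] let μ_p denote the i.i.d. Bernoulli(p) product measure on {0,1}^ℕ. Suppose ρ ≥ 0 is such that for every p ∈ (1/2, 1], μ_p[ τ < ∞ and |{m ≤ τ : X_m = 1}| ≤ τ/2 ] ≤ ρ (i.e., under every biased coin the rule stops with the more probable value 1 failing to be a strict majority with probability at most ρ). Then under the fair-coin measure μ_{1/2}, the probability that τ is finite satisfies μ_{1/2}[ τ < ∞ ] ≤ 2ρ. -/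
/-!
Let `E` be the event that `τ` stops at a time `t` at which the ones are not a strict majority.
If `τ` stops at `t` with a strict majority of ones, then by symmetry the flipped sequence stops
at `t` with a strict minority of ones, so `{τ < ∞} ⊆ E ∪ flip⁻¹ E`. The fair coin is invariant
under flipping, hence `P_{1/2}(τ < ∞) ≤ 2 P_{1/2}(E)`. Finally, the part of `E` where `τ` stops
before `T` depends only on the first `T` bits, so its probability is a polynomial in `p`; the
bound `ρ` for `p > 1/2` therefore persists at `p = 1/2`, and letting `T → ∞` gives
`P_{1/2}(E) ≤ ρ`.
-/

open MeasureTheory ENNReal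

/-- Number of `1`s (`true`s) among the first `t` bits of `ω`. -/
def countOnes (t : ℕ) (ω : ℕ → Bool) : ℕ :=
  ((Finset.range t).filter (fun m => ω m = true)).card

namespace BitSeq

def firstBits (n : ℕ) (ω : ℕ → Bool) : Fin n → Bool := fun m => ω m

def cylinder {n : ℕ} (s : Fin n → Bool) : Set (ℕ → Bool) := {ω | ∀ m : Fin n, ω m = s m}

def flipBits (ω : ℕ → Bool) : ℕ → Bool := fun k => !(ω k)

def DependsOnFirst (n : ℕ) (S : Set (ℕ → Bool)) : Prop :=
  ∀ ω ω' : ℕ → Bool, (∀ m < n, ω m = ω' m) → (ω ∈ S ↔ ω' ∈ S)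

def IsBernoulliLaw (μ : Measure (ℕ → Bool)) (p : ℝ) : Prop :=
  ∀ (n : ℕ) (s : Fin n → Bool),
    μ (cylinder s) = ∏ m : Fin n, ENNReal.ofReal (if s m then p else 1 - p)

lemma firstBits_eq_firstBits_iff {n : ℕ} {ω ω' : ℕ → Bool} :
    firstBits n ω = firstBits n ω' ↔ ∀ m < n, ω m = ω' m := by
  simp [firstBits, funext_iff, Fin.forall_iff]

lemma measurable_firstBits (n : ℕ) : Measurable (firstBits n) :=
  measurable_pi_lambda _ fun m => measurable_pi_apply (m : ℕ)

lemma measurable_flipBits : Measurable flipBits :=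
  measurable_pi_lambda _ fun k => measurable_of_countable (fun b : Bool => !b) |>.comp
    (measurable_pi_apply k)

lemma cylinder_eq_preimage {n : ℕ} (s : Fin n → Bool) : cylinder s = firstBits n ⁻¹' {s} := by
  ext ω
  simp [cylinder, firstBits, funext_iff]

lemma measurableSet_cylinder {n : ℕ} (s : Fin n → Bool) : MeasurableSet (cylinder s) := by
  rw [cylinder_eq_preimage]
  exact measurable_firstBits n (measurableSet_singleton s)

lemma flipBits_preimage_cylinder {n : ℕ} (s : Fin n → Bool) :
    flipBits ⁻¹' cylinder s = cylinder (fun m => !(s m)) := by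
  ext ω
  simp [cylinder, flipBits, Bool.not_eq_eq_eq_not]

namespace DependsOnFirst

variable {n : ℕ} {S : Set (ℕ → Bool)}

lemma eq_preimage (hS : DependsOnFirst n S) : S = firstBits n ⁻¹' (firstBits n '' S) := by
  refine (Set.subset_preimage_image _ _).antisymm ?_
  rintro ω ⟨ω', hω', hagree⟩
  exact (hS ω' ω (firstBits_eq_firstBits_iff.mp hagree)).mp hω'

lemma measurableSet (hS : DependsOnFirst n S) : MeasurableSet S := by
  rw [hS.eq_preimage]
  exact measurable_firstBits n MeasurableSet.of_discrete

open Classical in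
lemma measure_eq_sum (hS : DependsOnFirst n S) (μ : Measure (ℕ → Bool)) :
    μ S = ∑ s ∈ (firstBits n '' S).toFinset, μ (cylinder s) := by
  simp_rw [cylinder_eq_preimage]
  rw [sum_measure_preimage_singleton _
      fun s _ => measurable_firstBits n (measurableSet_singleton s),
    Set.coe_toFinset, ← hS.eq_preimage]

end DependsOnFirst

namespace IsBernoulliLaw

variable {μ ν : Measure (ℕ → Bool)} {p : ℝ}

open Classical in
lemma measure_eq {n : ℕ} {S : Set (ℕ → Bool)} (hμ : IsBernoulliLaw μ p)
    (hS : DependsOnFirst n S) :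
    μ S = ∑ s ∈ (firstBits n '' S).toFinset,
      ∏ m : Fin n, ENNReal.ofReal (if s m then p else 1 - p) := by
  rw [hS.measure_eq_sum]
  exact Finset.sum_congr rfl fun s _ => hμ n s

lemma map_flipBits (hμ : IsBernoulliLaw μ p) : IsBernoulliLaw (μ.map flipBits) (1 - p) := by
  intro n s
  rw [Measure.map_apply measurable_flipBits (measurableSet_cylinder s),
    flipBits_preimage_cylinder, hμ]
  refine Finset.prod_congr rfl fun m _ => ?_
  cases s m <;> simp

lemma measure_congr {n : ℕ} {S : Set (ℕ → Bool)} (hμ : IsBernoulliLaw μ p)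
    (hν : IsBernoulliLaw ν p) (hS : DependsOnFirst n S) : μ S = ν S := by
  rw [hμ.measure_eq hS, hν.measure_eq hS]

lemma measure_flipBits_preimage {n : ℕ} {S : Set (ℕ → Bool)} (hμ : IsBernoulliLaw μ p)
    (hν : IsBernoulliLaw ν (1 - p)) (hS : DependsOnFirst n S) : μ (flipBits ⁻¹' S) = ν S := by
  rw [← Measure.map_apply measurable_flipBits hS.measurableSet]
  exact hμ.map_flipBits.measure_congr hν hS

lemma measure_flipBits_preimage_iUnion {F : ℕ → Set (ℕ → Bool)} (hμ : IsBernoulliLaw μ p)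
    (hν : IsBernoulliLaw ν (1 - p)) (hmono : Monotone F) (hF : ∀ T, DependsOnFirst T (F T)) :
    μ (flipBits ⁻¹' ⋃ T, F T) = ν (⋃ T, F T) := by
  rw [Set.preimage_iUnion, Monotone.measure_iUnion fun _ _ h => Set.preimage_mono (hmono h),
    hmono.measure_iUnion]
  exact iSup_congr fun T => hμ.measure_flipBits_preimage hν (hF T)

end IsBernoulliLaw

section BernoulliFamily

variable {P : ℝ → Measure (ℕ → Bool)} {n : ℕ} {S : Set (ℕ → Bool)}

lemma continuousOn_measure (hP : ∀ p ∈ Set.Icc (0 : ℝ) 1, IsBernoulliLaw (P p) p)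
    (hS : DependsOnFirst n S) : ContinuousOn (fun p => P p S) (Set.Icc 0 1) := by
  classical
  -- on `[0, 1]`, `P p S` is `ENNReal.ofReal (f p)` for this polynomial `f`
  set f : ℝ → ℝ := fun p =>
    ∑ s ∈ (firstBits n '' S).toFinset, ∏ m : Fin n, if s m then p else 1 - p
  have hf : Continuous f :=
    continuous_finsetSum _ fun s _ => continuous_finsetProd _ fun m _ => by
      cases s m <;> simp only [Bool.false_eq_true, if_true, if_false] <;> fun_prop
  refine (ENNReal.continuous_ofReal.comp hf).continuousOn.congr fun p hp => ?_
  have hfactor : ∀ b : Bool, 0 ≤ if b then p else 1 - p := by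
    intro b; cases b <;> simp [hp.1, hp.2]
  rw [(hP p hp).measure_eq hS, Function.comp_apply,
    ENNReal.ofReal_sum_of_nonneg fun s _ => Finset.prod_nonneg fun m _ => hfactor _]
  exact Finset.sum_congr rfl fun s _ =>
    (ENNReal.ofReal_prod_of_nonneg fun m _ => hfactor _).symm

lemma measure_half_le_of_forall_gt_half
    (hP : ∀ p ∈ Set.Icc (0 : ℝ) 1, IsBernoulliLaw (P p) p) (hS : DependsOnFirst n S) {c : ℝ≥0∞}
    (hc : ∀ p ∈ Set.Ioc (1 / 2 : ℝ) 1, P p S ≤ c) : P (1 / 2) S ≤ c := by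
  have hcl : closure (Set.Ioc (1 / 2 : ℝ) 1) = Set.Icc (1 / 2) 1 := closure_Ioc (by norm_num)
  refine le_on_closure hc ?_ continuousOn_const (by rw [hcl]; norm_num)
  rw [hcl]
  exact (continuousOn_measure hP hS).mono (Set.Icc_subset_Icc_left (by norm_num))

lemma measure_half_iUnion_le_of_forall_gt_half
    (hP : ∀ p ∈ Set.Icc (0 : ℝ) 1, IsBernoulliLaw (P p) p) {F : ℕ → Set (ℕ → Bool)}
    (hmono : Monotone F) (hF : ∀ T, DependsOnFirst T (F T)) {c : ℝ≥0∞}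
    (hc : ∀ p ∈ Set.Ioc (1 / 2 : ℝ) 1, P p (⋃ T, F T) ≤ c) : P (1 / 2) (⋃ T, F T) ≤ c := by
  rw [hmono.measure_iUnion]
  exact iSup_le fun T => measure_half_le_of_forall_gt_half hP (hF T) fun p hp =>
    (measure_mono (Set.subset_iUnion F T)).trans (hc p hp)

end BernoulliFamily

lemma countOnes_congr {t : ℕ} {ω ω' : ℕ → Bool} (h : ∀ m < t, ω m = ω' m) :
    countOnes t ω = countOnes t ω' := by
  unfold countOnes
  congr 1
  exact Finset.filter_congr fun m hm => by rw [h m (Finset.mem_range.mp hm)]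

lemma countOnes_flipBits_add (t : ℕ) (ω : ℕ → Bool) :
    countOnes t (flipBits ω) + countOnes t ω = t := by
  have hfilter : (Finset.range t).filter (fun m => flipBits ω m = true) =
      (Finset.range t).filter (fun m => ¬ω m = true) :=
    Finset.filter_congr fun m _ => by simp [flipBits]
  rw [countOnes, countOnes, hfilter, add_comm, Finset.card_filter_add_card_filter_not,
    Finset.card_range]

section StoppingRule

variable {τ : (ℕ → Bool) → ℕ∞}

def minorityStop (τ : (ℕ → Bool) → ℕ∞) : Set (ℕ → Bool) :=
  {ω | ∃ t : ℕ, τ ω = t ∧ 2 * countOnes t ω ≤ t}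

def minorityStopBefore (τ : (ℕ → Bool) → ℕ∞) (T : ℕ) : Set (ℕ → Bool) :=
  {ω | ∃ t < T, τ ω = t ∧ 2 * countOnes t ω ≤ t}

lemma monotone_minorityStopBefore : Monotone (minorityStopBefore τ) :=
  fun _ _ hT _ ⟨t, ht, hω⟩ => ⟨t, ht.trans_le hT, hω⟩

lemma iUnion_minorityStopBefore : ⋃ T, minorityStopBefore τ T = minorityStop τ := by
  ext ω
  simp only [minorityStop, minorityStopBefore, Set.mem_iUnion, Set.mem_ofPred_eq]
  exact ⟨fun ⟨_, t, _, hω⟩ => ⟨t, hω⟩, fun ⟨t, hω⟩ => ⟨t + 1, t, t.lt_succ_self, hω⟩⟩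

lemma dependsOnFirst_minorityStopBefore
    (hadapted : ∀ (t : ℕ) (ω ω' : ℕ → Bool), (∀ m < t, ω m = ω' m) → (τ ω = t ↔ τ ω' = t))
    (T : ℕ) : DependsOnFirst T (minorityStopBefore τ T) := by
  intro ω ω' hagree
  refine exists_congr fun t => and_congr_right fun ht => ?_
  have hagree_t : ∀ m < t, ω m = ω' m := fun m hm => hagree m (hm.trans ht)
  rw [hadapted t ω ω' hagree_t, countOnes_congr hagree_t]

lemma setOf_stops_subset_union_flipBits
    (hsym : ∀ (t : ℕ) (ω : ℕ → Bool), τ ω = t ↔ τ (flipBits ω) = t) :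
    {ω | ∃ t : ℕ, τ ω = t} ⊆ minorityStop τ ∪ flipBits ⁻¹' minorityStop τ := by
  rintro ω ⟨t, hτ⟩
  by_cases hmin : 2 * countOnes t ω ≤ t
  · exact Or.inl ⟨t, hτ, hmin⟩
  · have hflip := countOnes_flipBits_add t ω
    exact Or.inr ⟨t, (hsym t ω).mp hτ, by omega⟩

end StoppingRule

end BitSeq

open BitSeq in
theorem stmt12_general (P : ℝ → Measure (ℕ → Bool))
    (hP : ∀ p : ℝ, 0 ≤ p → p ≤ 1 → ∀ (t : ℕ) (s : Fin t → Bool),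
      P p {ω | ∀ m : Fin t, ω (m : ℕ) = s m}
        = ∏ m : Fin t, ENNReal.ofReal (if s m then p else 1 - p))
    (τ : (ℕ → Bool) → ℕ∞)
    (hadapted : ∀ (t : ℕ) (ω ω' : ℕ → Bool),
      (∀ m < t, ω m = ω' m) → (τ ω = t ↔ τ ω' = t))
    (hsym : ∀ (t : ℕ) (ω : ℕ → Bool), τ ω = t ↔ τ (fun n => !(ω n)) = t)
    (ρ : ℝ)
    (herr : ∀ p : ℝ, 1 / 2 < p → p ≤ 1 →
      P p {ω | ∃ t : ℕ, τ ω = (t : ℕ∞) ∧ 2 * countOnes t ω ≤ t}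
        ≤ ENNReal.ofReal ρ) :
    P (1 / 2) {ω | ∃ t : ℕ, τ ω = (t : ℕ∞)} ≤ ENNReal.ofReal (2 * ρ) := by
  have hlaw : ∀ p ∈ Set.Icc (0 : ℝ) 1, IsBernoulliLaw (P p) p := fun p hp => hP p hp.1 hp.2
  have hfair : IsBernoulliLaw (P (1 / 2)) (1 / 2) := hlaw _ ⟨by norm_num, by norm_num⟩
  have hmin : P (1 / 2) (minorityStop τ) ≤ ENNReal.ofReal ρ := by
    rw [← iUnion_minorityStopBefore]
    exact measure_half_iUnion_le_of_forall_gt_half hlaw monotone_minorityStopBefore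
      (dependsOnFirst_minorityStopBefore hadapted) fun p hp =>
        iUnion_minorityStopBefore ▸ herr p hp.1 hp.2
  have hmin_flip : P (1 / 2) (flipBits ⁻¹' minorityStop τ) = P (1 / 2) (minorityStop τ) := by
    rw [← iUnion_minorityStopBefore]
    exact hfair.measure_flipBits_preimage_iUnion
      (by rwa [show (1 : ℝ) - 1 / 2 = 1 / 2 by norm_num]) monotone_minorityStopBefore
      (dependsOnFirst_minorityStopBefore hadapted)
  calc P (1 / 2) {ω | ∃ t : ℕ, τ ω = t}
      ≤ P (1 / 2) (minorityStop τ) + P (1 / 2) (flipBits ⁻¹' minorityStop τ) :=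
        (measure_mono (setOf_stops_subset_union_flipBits hsym)).trans (measure_union_le _ _)
    _ = 2 * P (1 / 2) (minorityStop τ) := by rw [hmin_flip, two_mul]
    _ ≤ 2 * ENNReal.ofReal ρ := by gcongr
    _ = ENNReal.ofReal (2 * ρ) := by rw [ENNReal.ofReal_mul zero_le_two, ENNReal.ofReal_ofNat]

/-- **Lemma 4.4 (LB-infty).** Let `P p` be the law of an i.i.d. Bernoulli(`p`)
bit sequence (characterized by its cylinder probabilities), and let `τ` be a
symmetric stopping time: for each `t`, the event `{τ = t}` depends only on the
first `t` bits and is invariant under flipping all bits. If for every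
`p ∈ (1/2, 1]` the probability that the rule stops with the more probable
value `1` failing to be a strict majority is at most `ρ`, then under the fair
coin `p = 1/2` the rule stops in finite time with probability at most `2ρ`. -/
theorem stmt12 (P : ℝ → Measure (ℕ → Bool))
    (hP : ∀ p : ℝ, 0 ≤ p → p ≤ 1 → ∀ (t : ℕ) (s : Fin t → Bool),
      P p {ω | ∀ m : Fin t, ω (m : ℕ) = s m}
        = ∏ m : Fin t, ENNReal.ofReal (if s m then p else 1 - p))
    (τ : (ℕ → Bool) → ℕ∞)
    (hadapted : ∀ (t : ℕ) (ω ω' : ℕ → Bool),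
      (∀ m < t, ω m = ω' m) → (τ ω = t ↔ τ ω' = t))
    (hsym : ∀ (t : ℕ) (ω : ℕ → Bool), τ ω = t ↔ τ (fun n => !(ω n)) = t)
    (ρ : ℝ) (hρ : 0 ≤ ρ)
    (herr : ∀ p : ℝ, 1 / 2 < p → p ≤ 1 →
      P p {ω | ∃ t : ℕ, τ ω = (t : ℕ∞) ∧ 2 * countOnes t ω ≤ t}
        ≤ ENNReal.ofReal ρ) :
    P (1 / 2) {ω | ∃ t : ℕ, τ ω = (t : ℕ∞)} ≤ ENNReal.ofReal (2 * ρ) :=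
  stmt12_general P hP τ hadapted hsym ρ herr
end
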